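/- arXiv:0912.2342 — 2 statements merged into one kernel-verified Lean document; each statement's English description precedes it below -/
import Mathlib

section
/- Let F_q be a finite field with q elements and let n ≥ 1 be odd, α ∈ F_q^* with α ≠ (-1)^{(n+1)/2}. Then the number N_{A_n}(α) of solutions in F_q^{2n} of the type A_n system with first coefficient α and all others 1 equals (q^{(n+1)/2} - 1)(q^{(n+3)/2} - 1)/(q² - 1). -/
/-- Extension of `x : Fin n → F` to all of `ℕ`, with value `1` outside `{1, …, n}`
(1-indexed: `extA x k = x (k-1)` for `1 ≤ k ≤ n`). -/
def extA {F : Type*} [One F] {n : ℕ} (x : Fin n → F) (k : ℕ) : F :=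
  if h : 1 ≤ k ∧ k ≤ n then x ⟨k - 1, by omega⟩ else 1

/-- Number of points over `F` of the type `Aₙ` variety `X_{Aₙ}(α, 1, …, 1)`:
solutions of `xₖ xₖ' = 1 + cₖ x_{k-1} x_{k+1}` with `c₁ = α`, `cₖ = 1` otherwise,
and the convention `x₀ = x_{n+1} = 1`. -/
noncomputable def NA (F : Type*) [Field F] (n : ℕ) (α : F) : ℕ :=
  Nat.card {p : (Fin n → F) × (Fin n → F) //
    ∀ k, 1 ≤ k → k ≤ n →
      extA p.1 k * extA p.2 k =
        1 + (if k = 1 then α else 1) * extA p.1 (k - 1) * extA p.1 (k + 1)}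

/-!
Fibre the solutions over `s = x₁`. For `s ≠ 0` the value `x₁'` is determined and
`(x₂, …, xₙ)` solves the `Aₙ₋₁` system with first coefficient `s`. For `s = 0`, `x₁'` is free
and the first equation forces `x₂ = -α⁻¹ ≠ 0`, which determines `x₂'` and leaves the `Aₙ₋₂`
system with first coefficient `-α⁻¹`. Hence
`N_{k+2}(α) = q N_k(-α⁻¹) + ∑_{s ≠ 0} N_{k+1}(s)`, and a joint induction shows that
`(q² - 1) N_{2t}(α) = q^{2t+2} - 1` for every `α ≠ 0`, while `(q² - 1) N_{2t+1}(α)` equals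
`(q^{t+1} - 1)(q^{t+2} - 1)` plus a correction `q^{t+1}(q² - 1)` exactly when `α = (-1)^{t+1}`.
-/

open Finset

section Extension

variable {M : Type*}

theorem extA_of_not_mem [One M] {n k : ℕ} (x : Fin n → M) (h : ¬(1 ≤ k ∧ k ≤ n)) :
    extA x k = 1 :=
  dif_neg h

theorem extA_one [One M] {n : ℕ} (x : Fin (n + 1) → M) : extA x 1 = x 0 :=
  dif_pos ⟨le_rfl, by omega⟩

theorem extA_tail [One M] {n j : ℕ} (x : Fin (n + 1) → M) (hj : 1 ≤ j) :
    extA (Fin.tail x) j = extA x (j + 1) := by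
  by_cases h : j ≤ n
  · simp only [extA, dif_pos (And.intro hj h), dif_pos (And.intro (by omega : 1 ≤ j + 1)
      (by omega : j + 1 ≤ n + 1)), Fin.tail]
    congr 1
    ext
    simp only [Fin.val_succ]
    omega
  · rw [extA_of_not_mem _ (by omega), extA_of_not_mem _ (by omega)]

theorem ite_mul_extA_tail_sub_one [MulOneClass M] {n j : ℕ} (x : Fin (n + 1) → M)
    (hj : 1 ≤ j) : (if j = 1 then x 0 else 1) * extA (Fin.tail x) (j - 1) = extA x j := by
  rcases eq_or_ne j 1 with rfl | hj1
  · rw [if_pos rfl, extA_of_not_mem _ (by omega), mul_one, extA_one]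
  · rw [if_neg hj1, one_mul, extA_tail x (by omega), Nat.sub_add_cancel hj]

end Extension

section SumErase

variable {ι R : Type*} [Fintype ι] [DecidableEq ι] [Ring R]

theorem sum_erase_mul_of_forall (a : ι) {f : ι → R} {D A : R} (hf : ∀ i ≠ a, f i * D = A) :
    (∑ i ∈ univ.erase a, f i) * D = (Fintype.card ι - 1) * A := by
  rw [sum_mul, sum_congr rfl fun i hi => hf i (ne_of_mem_erase hi), sum_const,
    card_erase_of_mem (mem_univ _), card_univ, nsmul_eq_mul,
    Nat.cast_sub (Fintype.card_pos_iff.2 ⟨a⟩), Nat.cast_one]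

theorem sum_erase_mul_of_forall_ite {a c : ι} (hc : c ≠ a) {f : ι → R} {D A B : R}
    (hf : ∀ i ≠ a, f i * D = A + if i = c then B else 0) :
    (∑ i ∈ univ.erase a, f i) * D = (Fintype.card ι - 1) * A + B := by
  rw [sum_mul, sum_congr rfl fun i hi => hf i (ne_of_mem_erase hi), sum_add_distrib, sum_const,
    card_erase_of_mem (mem_univ _), card_univ, nsmul_eq_mul,
    Nat.cast_sub (Fintype.card_pos_iff.2 ⟨a⟩), Nat.cast_one, sum_ite_eq',
    if_pos (mem_erase.2 ⟨hc, mem_univ _⟩)]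

end SumErase

theorem neg_inv_eq_neg_one_pow_iff {K : Type*} [DivisionRing K] {a : K} (k : ℕ) :
    -a⁻¹ = (-1) ^ k ↔ a = (-1) ^ (k + 1) := by
  rw [neg_eq_iff_eq_neg, inv_eq_iff_eq_inv, pow_succ, mul_neg_one, inv_neg, ← inv_pow, inv_neg,
    inv_one]

section Count

variable {F : Type*} [Field F]

def EqnA (α : F) {n : ℕ} (x x' : Fin n → F) (k : ℕ) : Prop :=
  extA x k * extA x' k = 1 + (if k = 1 then α else 1) * extA x (k - 1) * extA x (k + 1)

variable (F) in
def SolA (n : ℕ) (α : F) : Type _ :=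
  {p : (Fin n → F) × (Fin n → F) // ∀ k, 1 ≤ k → k ≤ n → EqnA α p.1 p.2 k}

theorem NA_eq_card (n : ℕ) (α : F) : NA F n α = Nat.card (SolA F n α) := rfl

instance [Finite F] (n : ℕ) (α : F) : Finite (SolA F n α) := Subtype.finite

theorem eqnA_one_iff {n : ℕ} (α : F) (x x' : Fin (n + 1) → F) :
    EqnA α x x' 1 ↔ x 0 * x' 0 = 1 + α * extA (Fin.tail x) 1 := by
  rw [EqnA, extA_one, extA_one, extA_of_not_mem x (by omega), extA_tail x le_rfl, if_pos rfl,
    mul_one]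

theorem eqnA_succ_iff {n j : ℕ} (α : F) (x x' : Fin (n + 1) → F) (hj : 1 ≤ j) :
    EqnA α x x' (j + 1) ↔ EqnA (x 0) (Fin.tail x) (Fin.tail x') j := by
  rw [EqnA, EqnA, ite_mul_extA_tail_sub_one x hj, extA_tail x hj, extA_tail x' hj,
    extA_tail x (by omega : 1 ≤ j + 1), if_neg (by omega), one_mul, Nat.add_sub_cancel]

theorem solA_succ_iff {n : ℕ} (α : F) (x x' : Fin (n + 1) → F) :
    (∀ k, 1 ≤ k → k ≤ n + 1 → EqnA α x x' k) ↔
      x 0 * x' 0 = 1 + α * extA (Fin.tail x) 1 ∧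
        ∀ k, 1 ≤ k → k ≤ n → EqnA (x 0) (Fin.tail x) (Fin.tail x') k := by
  constructor
  · intro h
    exact ⟨(eqnA_one_iff α x x').1 (h 1 le_rfl (by omega)), fun k hk hkn =>
      (eqnA_succ_iff α x x' hk).1 (h (k + 1) (by omega) (by omega))⟩
  · rintro ⟨h₁, h⟩ k hk hkn
    obtain rfl | ⟨j, hj, rfl⟩ : k = 1 ∨ ∃ j, 1 ≤ j ∧ k = j + 1 :=
      (eq_or_ne k 1).imp_right fun hk1 => ⟨k - 1, by omega, by omega⟩
    · exact (eqnA_one_iff α x x').2 h₁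
    · exact (eqnA_succ_iff α x x' hj).2 (h j hj (by omega))

/-- Solutions of the `Aₙ₊₁` system with `x₁ = s`, encoded as `(x₁', (x₂, …, xₙ₊₁))`. -/
def SolA.Fiber (n : ℕ) (α s : F) : Type _ :=
  {w : F × SolA F n s // s * w.1 = 1 + α * extA w.2.1.1 1}

instance [Finite F] (n : ℕ) (α s : F) : Finite (SolA.Fiber n α s) := Subtype.finite

def SolA.succEquiv (n : ℕ) (α : F) : SolA F (n + 1) α ≃ Σ s, SolA.Fiber n α s where
  toFun p :=
    have h := (solA_succ_iff α p.1.1 p.1.2).1 p.2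
    ⟨p.1.1 0, ⟨(p.1.2 0, ⟨(Fin.tail p.1.1, Fin.tail p.1.2), h.2⟩), h.1⟩⟩
  invFun w := ⟨(Fin.cons w.1 w.2.1.2.1.1, Fin.cons w.2.1.1 w.2.1.2.1.2),
    (solA_succ_iff α _ _).2 ⟨w.2.2, w.2.1.2.2⟩⟩
  left_inv _ := Subtype.ext (Prod.ext (Fin.cons_self_tail _) (Fin.cons_self_tail _))
  right_inv _ := rfl

def SolA.fiberEquivOfNeZero (n : ℕ) (α : F) {s : F} (hs : s ≠ 0) :
    SolA.Fiber n α s ≃ SolA F n s where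
  toFun w := w.1.2
  invFun y := ⟨(s⁻¹ * (1 + α * extA y.1.1 1), y), by rw [mul_inv_cancel_left₀ hs]⟩
  left_inv w := Subtype.ext (Prod.ext ((inv_mul_eq_iff_eq_mul₀ hs).2 w.2.symm) rfl)
  right_inv _ := rfl

def SolA.fiberZeroEquiv (n : ℕ) {α : F} (hα : α ≠ 0) :
    SolA.Fiber n α 0 ≃ F × {y : SolA F n 0 // extA y.1.1 1 = -α⁻¹} where
  toFun w := (w.1.1, ⟨w.1.2, by
    rw [eq_neg_iff_add_eq_zero, ← mul_right_inj' hα, mul_add, mul_inv_cancel₀ hα, mul_zero,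
      add_comm, ← w.2, zero_mul]⟩)
  invFun z := ⟨(z.1, z.2.1), by
    rw [zero_mul, z.2.2, mul_neg, mul_inv_cancel₀ hα, add_neg_cancel]⟩
  left_inv _ := rfl
  right_inv _ := rfl

def SolA.headEquiv (n : ℕ) {u : F} (hu : u ≠ 0) :
    {y : SolA F (n + 1) 0 // extA y.1.1 1 = u} ≃ SolA F n u :=
  ((SolA.succEquiv n 0).subtypeEquiv fun y => by rw [extA_one]; rfl).trans <|
    (Equiv.sigmaSubtype u).trans (SolA.fiberEquivOfNeZero n 0 hu)

theorem NA_zero (α : F) : NA F 0 α = 1 := by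
  rw [NA_eq_card, Nat.card_eq_one_iff_unique]
  exact ⟨⟨fun _ _ => Subtype.ext (Subsingleton.elim _ _)⟩,
    ⟨⟨(Fin.elim0, Fin.elim0), fun k hk hk0 => by omega⟩⟩⟩

variable [DecidableEq F]

theorem card_head_solA_zero (u : F) :
    Nat.card {y : SolA F 0 0 // extA y.1.1 1 = u} = if u = 1 then 1 else 0 := by
  have hhead (y : SolA F 0 0) : extA y.1.1 1 = 1 := extA_of_not_mem _ (by omega)
  split_ifs with hu
  · subst hu
    rw [Nat.card_congr (Equiv.subtypeUnivEquiv hhead), ← NA_eq_card, NA_zero]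
  · rw [Nat.card_eq_zero]
    exact .inl ⟨fun y => hu (y.2 ▸ (hhead y.1).symm)⟩

variable [Fintype F]

theorem NA_succ (n : ℕ) {α : F} (hα : α ≠ 0) :
    NA F (n + 1) α = Fintype.card F * Nat.card {y : SolA F n 0 // extA y.1.1 1 = -α⁻¹} +
      ∑ s ∈ univ.erase 0, NA F n s := by
  rw [NA_eq_card, Nat.card_congr (SolA.succEquiv n α), Nat.card_sigma,
    ← add_sum_erase _ _ (mem_univ 0), Nat.card_congr (SolA.fiberZeroEquiv n hα),
    Nat.card_prod, Nat.card_eq_fintype_card]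
  exact congrArg _ (sum_congr rfl fun s hs =>
    Nat.card_congr (SolA.fiberEquivOfNeZero n α (ne_of_mem_erase hs)))

theorem NA_one {α : F} (hα : α ≠ 0) :
    NA F 1 α = Fintype.card F * (if α = -1 then 1 else 0) + (Fintype.card F - 1) := by
  have hiff : -α⁻¹ = 1 ↔ α = -1 := by
    rw [neg_eq_iff_eq_neg, inv_eq_iff_eq_inv, inv_neg, inv_one]
  rw [NA_succ 0 hα, card_head_solA_zero, if_congr hiff rfl rfl,
    sum_congr rfl fun s _ => NA_zero s, sum_const, smul_eq_mul, mul_one,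
    card_erase_of_mem (mem_univ _), card_univ]

theorem NA_add_two (n : ℕ) {α : F} (hα : α ≠ 0) :
    NA F (n + 2) α = Fintype.card F * NA F n (-α⁻¹) + ∑ s ∈ univ.erase 0, NA F (n + 1) s := by
  rw [NA_succ (n + 1) hα, NA_eq_card n,
    Nat.card_congr (SolA.headEquiv n (neg_ne_zero.2 (inv_ne_zero hα)))]

local notation "q" => (Fintype.card F : ℤ)

variable (F) in
def EvenClosedForm (t : ℕ) : Prop :=
  ∀ α : F, α ≠ 0 → (NA F (2 * t) α : ℤ) * (q ^ 2 - 1) = q ^ (2 * t + 2) - 1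

variable (F) in
def OddClosedForm (t : ℕ) : Prop :=
  ∀ α : F, α ≠ 0 → (NA F (2 * t + 1) α : ℤ) * (q ^ 2 - 1) =
    (q ^ (t + 1) - 1) * (q ^ (t + 2) - 1) +
      if α = (-1) ^ (t + 1) then q ^ (t + 1) * (q ^ 2 - 1) else 0

theorem oddClosedForm_zero : OddClosedForm F 0 := fun α hα => by
  simp only [Nat.mul_zero, zero_add, pow_one]
  rw [NA_one hα, Nat.cast_add, Nat.cast_mul, Nat.cast_sub Fintype.card_pos]
  split_ifs <;> push_cast <;> ring

theorem EvenClosedForm.succ {t : ℕ} (heven : EvenClosedForm F t) (hodd : OddClosedForm F t) :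
    EvenClosedForm F (t + 1) := fun α hα => by
  have hsum := sum_erase_mul_of_forall_ite (pow_ne_zero (t + 1) (neg_ne_zero.2 one_ne_zero)) hodd
  rw [show 2 * (t + 1) = 2 * t + 2 by ring, NA_add_two (2 * t) hα]
  push_cast
  rw [add_mul, mul_assoc, heven _ (neg_ne_zero.2 (inv_ne_zero hα)), hsum]
  ring

theorem OddClosedForm.succ {t : ℕ} (hodd : OddClosedForm F t) (heven : EvenClosedForm F (t + 1)) :
    OddClosedForm F (t + 1) := fun α hα => by
  have hsum := sum_erase_mul_of_forall (0 : F) heven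
  rw [show 2 * (t + 1) + 1 = 2 * t + 1 + 2 by ring, NA_add_two (2 * t + 1) hα,
    show 2 * t + 1 + 1 = 2 * (t + 1) by ring]
  push_cast
  rw [add_mul, mul_assoc, hodd _ (neg_ne_zero.2 (inv_ne_zero hα)), hsum,
    if_congr (neg_inv_eq_neg_one_pow_iff (t + 1)) rfl rfl]
  split_ifs <;> ring

theorem evenClosedForm_and_oddClosedForm (t : ℕ) : EvenClosedForm F t ∧ OddClosedForm F t := by
  induction t with
  | zero => exact ⟨fun α _ => by simp [NA_zero], oddClosedForm_zero⟩
  | succ t ih =>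
    have heven := ih.1.succ ih.2
    exact ⟨heven, ih.2.succ heven⟩

end Count

theorem stmt_9_general (F : Type*) [Field F] [Fintype F] (n : ℕ) (hodd : Odd n)
    (α : F) (hα : α ≠ 0) (hα' : α ≠ (-1) ^ ((n + 1) / 2)) :
    (NA F n α : ℤ) * ((Fintype.card F : ℤ) ^ 2 - 1) =
      ((Fintype.card F : ℤ) ^ ((n + 1) / 2) - 1) *
        ((Fintype.card F : ℤ) ^ ((n + 3) / 2) - 1) := by
  classical
  obtain ⟨t, rfl⟩ := hodd
  rw [show (2 * t + 1 + 1) / 2 = t + 1 by omega] at hα' ⊢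
  rw [show (2 * t + 1 + 3) / 2 = t + 2 by omega, (evenClosedForm_and_oddClosedForm t).2 α hα,
    if_neg hα', add_zero]

theorem stmt_9 (F : Type*) [Field F] [Fintype F] (n : ℕ) (hn : 1 ≤ n) (hodd : Odd n)
    (α : F) (hα : α ≠ 0) (hα' : α ≠ (-1) ^ ((n + 1) / 2)) :
    (NA F n α : ℤ) * ((Fintype.card F : ℤ) ^ 2 - 1) =
      ((Fintype.card F : ℤ) ^ ((n + 1) / 2) - 1) *
        ((Fintype.card F : ℤ) ^ ((n + 3) / 2) - 1) :=
  stmt_9_general F n hodd α hα hα'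
end

section
/- Let F_q be a finite field with q elements. The number of solutions in F_q^{12} of the type E_6 system (all coefficients 1): x₁x₁' = 1+x₂, x₂x₂' = 1+x₁x₃, x₃x₃' = 1+x₂x₄x₆, x₄x₄' = 1+x₃x₅, x₅x₅' = 1+x₄, x₆x₆' = 1+x₃ equals q⁶ + q⁴ + q³ + q² + 1. -/
/-!
Fix `x = (x₁, …, x₆)`. The equation `xᵢ xᵢ' = cᵢ(x)` has exactly one solution `xᵢ'` when
`xᵢ ≠ 0`, and `q` or no solutions when `xᵢ = 0`, according as `cᵢ(x)` vanishes or not; so the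
count is `∑ₓ ∏ᵢ #{y | xᵢ y = cᵢ(x)}`. Summing out the three leaves `x₁, x₅, x₆` of the diagram
leaves `∑_{x₂,x₃,x₄} L(x₃, x₂x₄) L(x₄, x₃) L(x₂, x₃)` with `L = leafSum`. For `u ≠ 0`,
`L(u, v)` is the number `H(u) = hyperbolaCount u` of points of the hyperbola `t t' = 1 + u`,
whereas `L(0, v)` is `q` or `0` according as `v ≠ 0` or `v = 0`. As `∑ᵤ H(u) = q²` and
`H(0) = q - 1`, the sum `S = ∑_{u ≠ 0} H(u)` equals `q² - q + 1`, and splitting according as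
`x₃ = 0` or not gives `q S² + (q + S)² S = q⁶ + q⁴ + q³ + q² + 1`.
-/

open Finset

section Fintype

variable {α : Type*} [Fintype α]

theorem sum_card_fiber_eq_card {β : Type*} [Finite β] (f : β → α) :
    ∑ a, Nat.card {b // f b = a} = Nat.card β := by
  rw [← Nat.card_sigma, Nat.card_congr (Equiv.sigmaFiberEquiv f)]

theorem sum_fin_succ_pi {M : Type*} [AddCommMonoid M] {n : ℕ} (g : (Fin (n + 1) → α) → M) :
    ∑ x, g x = ∑ a, ∑ x : Fin n → α, g (Matrix.vecCons a x) := by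
  rw [← (Fin.consEquiv fun _ => α).sum_comp, Fintype.sum_prod_type]
  rfl

end Fintype

section MulEq

variable {M : Type*}

theorem card_mul_eq_of_ne_zero [GroupWithZero M] {t : M} (ht : t ≠ 0) (c : M) :
    Nat.card {y : M // t * y = c} = 1 :=
  Nat.card_eq_one_iff_exists.2 ⟨⟨t⁻¹ * c, mul_inv_cancel_left₀ ht c⟩,
    fun y => Subtype.ext ((eq_inv_mul_iff_mul_eq₀ ht).2 y.2)⟩

theorem card_zero_mul_eq_zero [MulZeroClass M] : Nat.card {y : M // 0 * y = 0} = Nat.card M := by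
  simp only [zero_mul, Nat.card_congr (Equiv.subtypeUnivEquiv fun _ => trivial)]

theorem card_zero_mul_eq_of_ne_zero [MulZeroClass M] {c : M} (hc : c ≠ 0) :
    Nat.card {y : M // 0 * y = c} = 0 := by
  simp [zero_mul, hc.symm]

theorem card_solutions_eq_sum_prod [Mul M] [Fintype M] {ι : Type*} [Fintype ι] [DecidableEq ι]
    (rhs : (ι → M) → ι → M) :
    Nat.card {p : (ι → M) × (ι → M) // ∀ i, p.1 i * p.2 i = rhs p.1 i} =
      ∑ x : ι → M, ∏ i, Nat.card {y : M // x i * y = rhs x i} := by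
  refine (Nat.card_congr
    (Equiv.subtypeProdEquivSigmaSubtype fun (x y : ι → M) => ∀ i, x i * y i = rhs x i)).trans ?_
  rw [Nat.card_sigma]
  refine Finset.sum_congr rfl fun x _ => ?_
  rw [Nat.card_congr (Equiv.subtypePiEquivPi (p := fun i y => x i * y = rhs x i)), Nat.card_pi]

end MulEq

section Counting

variable {F : Type*} [Field F] [Fintype F]

noncomputable def hyperbolaCount (u : F) : ℕ := ∑ t : F, Nat.card {y : F // t * y = 1 + u}

/-- The contribution of a leaf `t` attached to a vertex `u` whose other neighbours multiply
to `v`. -/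
noncomputable def leafSum (u v : F) : ℕ :=
  ∑ t : F, Nat.card {y : F // t * y = 1 + u} * Nat.card {y : F // u * y = 1 + t * v}

theorem sum_hyperbolaCount : ∑ u : F, hyperbolaCount u = Fintype.card F ^ 2 := by
  have fiber (t : F) : ∑ u : F, Nat.card {y : F // t * y = 1 + u} = Fintype.card F := by
    rw [← Nat.card_eq_fintype_card, ← sum_card_fiber_eq_card (t * ·)]
    exact Equiv.sum_comp (Equiv.addLeft 1) fun c => Nat.card {y : F // t * y = c}
  simp only [hyperbolaCount]
  rw [Finset.sum_comm, Finset.sum_congr rfl fun t _ => fiber t, Finset.sum_const, card_univ,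
    smul_eq_mul, sq]

theorem hyperbolaCount_zero_add_one : hyperbolaCount (0 : F) + 1 = Fintype.card F := by
  classical
  have units (t : F) (ht : t ∈ ({0}ᶜ : Finset F)) : Nat.card {y : F // t * y = 1} = 1 :=
    card_mul_eq_of_ne_zero (by simpa using ht) _
  rw [hyperbolaCount, Fintype.sum_eq_add_sum_compl 0, add_zero,
    card_zero_mul_eq_of_ne_zero one_ne_zero, Finset.sum_congr rfl units, Finset.sum_const,
    card_compl, card_singleton, smul_eq_mul, mul_one, zero_add]
  have := Fintype.card_pos (α := F)
  omega

theorem sum_compl_zero_hyperbolaCount_add [DecidableEq F] :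
    ∑ u ∈ ({0}ᶜ : Finset F), hyperbolaCount u + Fintype.card F = Fintype.card F ^ 2 + 1 := by
  rw [← sum_hyperbolaCount, Fintype.sum_eq_add_sum_compl 0, ← hyperbolaCount_zero_add_one]
  ring

theorem leafSum_of_ne_zero {u : F} (hu : u ≠ 0) (v : F) : leafSum u v = hyperbolaCount u := by
  simp only [leafSum, hyperbolaCount, card_mul_eq_of_ne_zero hu, mul_one]

theorem leafSum_zero_zero : leafSum (0 : F) 0 = 0 := by
  simp only [leafSum, mul_zero, add_zero, card_zero_mul_eq_of_ne_zero (one_ne_zero' F),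
    Finset.sum_const_zero]

theorem leafSum_zero_of_ne_zero {v : F} (hv : v ≠ 0) : leafSum 0 v = Fintype.card F := by
  rw [leafSum, Finset.sum_eq_single (-v⁻¹)]
  · rw [card_mul_eq_of_ne_zero (by simpa using hv), one_mul, neg_mul, inv_mul_cancel₀ hv,
      add_neg_cancel, card_zero_mul_eq_zero, Nat.card_eq_fintype_card]
  · intro t _ ht
    rw [card_zero_mul_eq_of_ne_zero, mul_zero]
    contrapose! ht
    linear_combination v⁻¹ * ht - t * mul_inv_cancel₀ hv
  · simp

theorem sum_leafSum [DecidableEq F] (v : F) :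
    ∑ u, leafSum u v = leafSum 0 v + ∑ u ∈ ({0}ᶜ : Finset F), hyperbolaCount u := by
  rw [Fintype.sum_eq_add_sum_compl 0]
  congr 1
  exact Finset.sum_congr rfl fun u hu => leafSum_of_ne_zero (by simpa using hu) v

theorem leafSum_zero_mul_leafSum_mul_leafSum (b d : F) :
    leafSum 0 (b * d) * leafSum d 0 * leafSum b 0 =
      Fintype.card F * leafSum d 0 * leafSum b 0 := by
  rcases eq_or_ne b 0 with rfl | hb
  · simp [leafSum_zero_zero]
  rcases eq_or_ne d 0 with rfl | hd
  · simp [leafSum_zero_zero]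
  rw [leafSum_zero_of_ne_zero (mul_ne_zero hb hd)]

theorem sum_e6_leafSum [DecidableEq F] :
    ∑ b : F, ∑ c : F, ∑ d : F, leafSum c (b * d) * leafSum d c * leafSum b c =
      Fintype.card F * (∑ u ∈ ({0}ᶜ : Finset F), hyperbolaCount u) ^ 2 +
        (Fintype.card F + ∑ u ∈ ({0}ᶜ : Finset F), hyperbolaCount u) ^ 2 *
          ∑ u ∈ ({0}ᶜ : Finset F), hyperbolaCount u := by
  set H := ∑ u ∈ ({0}ᶜ : Finset F), hyperbolaCount u
  have center_zero : ∑ b : F, ∑ d : F, leafSum 0 (b * d) * leafSum d 0 * leafSum b 0 =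
      Fintype.card F * H ^ 2 := by
    simp only [leafSum_zero_mul_leafSum_mul_leafSum, ← Finset.sum_mul, ← Finset.mul_sum]
    rw [sum_leafSum, leafSum_zero_zero, zero_add]
    ring
  have center_ne_zero (c : F) (hc : c ≠ 0) :
      ∑ b : F, ∑ d : F, leafSum c (b * d) * leafSum d c * leafSum b c =
        (Fintype.card F + H) ^ 2 * hyperbolaCount c := by
    simp only [leafSum_of_ne_zero hc, ← Finset.sum_mul, ← Finset.mul_sum]
    rw [sum_leafSum, leafSum_zero_of_ne_zero hc]
    ring
  rw [Finset.sum_comm, Fintype.sum_eq_add_sum_compl 0, center_zero,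
    Finset.sum_congr rfl fun c hc => center_ne_zero c (by simpa using hc), ← Finset.mul_sum]

theorem card_e6_eq_sum_leafSum : Nat.card {p : (Fin 6 → F) × (Fin 6 → F) //
      p.1 0 * p.2 0 = 1 + p.1 1 ∧
      p.1 1 * p.2 1 = 1 + p.1 0 * p.1 2 ∧
      p.1 2 * p.2 2 = 1 + p.1 1 * p.1 3 * p.1 5 ∧
      p.1 3 * p.2 3 = 1 + p.1 2 * p.1 4 ∧
      p.1 4 * p.2 4 = 1 + p.1 3 ∧
      p.1 5 * p.2 5 = 1 + p.1 2} =
    ∑ b : F, ∑ c : F, ∑ d : F, leafSum c (b * d) * leafSum d c * leafSum b c := by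
  let rhs : (Fin 6 → F) → Fin 6 → F := fun x =>
    ![1 + x 1, 1 + x 0 * x 2, 1 + x 1 * x 3 * x 5, 1 + x 2 * x 4, 1 + x 3, 1 + x 2]
  rw [Nat.card_congr (Equiv.subtypeEquivRight fun p => ?_), card_solutions_eq_sum_prod rhs]
  · simp only [sum_fin_succ_pi, Fintype.sum_unique, Fin.prod_univ_six, rhs, Matrix.cons_val]
    conv_lhs => rw [Finset.sum_comm]
    refine Finset.sum_congr rfl fun b _ => ?_
    conv_lhs => rw [Finset.sum_comm]
    refine Finset.sum_congr rfl fun c _ => ?_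
    conv_lhs => rw [Finset.sum_comm]
    refine Finset.sum_congr rfl fun d _ => ?_
    simp only [leafSum, Finset.sum_mul, Finset.mul_sum]
    refine Finset.sum_congr rfl fun a _ => Finset.sum_congr rfl fun e _ =>
      Finset.sum_congr rfl fun f _ => ?_
    rw [mul_comm e c, mul_comm f (b * d)]
    ring
  · simp [Fin.forall_fin_succ, rhs]

end Counting

theorem stmt_16 (F : Type*) [Field F] [Fintype F] :
    Nat.card {p : (Fin 6 → F) × (Fin 6 → F) //
      p.1 0 * p.2 0 = 1 + p.1 1 ∧
      p.1 1 * p.2 1 = 1 + p.1 0 * p.1 2 ∧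
      p.1 2 * p.2 2 = 1 + p.1 1 * p.1 3 * p.1 5 ∧
      p.1 3 * p.2 3 = 1 + p.1 2 * p.1 4 ∧
      p.1 4 * p.2 4 = 1 + p.1 3 ∧
      p.1 5 * p.2 5 = 1 + p.1 2} =
    Fintype.card F ^ 6 + Fintype.card F ^ 4 + Fintype.card F ^ 3 +
      Fintype.card F ^ 2 + 1 := by
  classical
  rw [card_e6_eq_sum_leafSum, sum_e6_leafSum]
  have hS := sum_compl_zero_hyperbolaCount_add (F := F)
  set S := ∑ u ∈ ({0}ᶜ : Finset F), hyperbolaCount u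
  set q := Fintype.card F
  zify at hS ⊢
  rw [show (S : ℤ) = q ^ 2 + 1 - q by linarith]
  ring
end
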